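/- Let n = 2m, M_n be the maximum of symmetric simple random walk up to time n, N_n = ⌊(M_n+1)/2⌋, W = M_n/sqrt(n) and V = 2N_n/sqrt(n). Then the Kolmogorov distance satisfies d_K(V, W) = sup_z |P(V ≤ z) - P(W ≤ z)| ≤ sqrt(2/π)/sqrt(n), and the Wasserstein distance satisfies d_W(V, W) ≤ 1/sqrt(n). -/

import Mathlib

open MeasureTheory

/-- Uniform probability measure on the `2m` independent ±1 steps (encoded as Booleans). -/
noncomputable def walkP (m : ℕ) : Measure (Fin (2*m) → Bool) :=
  (PMF.uniformOfFintype (Fin (2*m) → Bool)).toMeasure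

/-- Position of the simple random walk at time `k`. -/
def walkS (m k : ℕ) (ω : Fin (2*m) → Bool) : ℤ :=
  ∑ i : Fin (2*m), if (i : ℕ) < k then (if ω i then 1 else -1) else 0

/-- The maximum `M_n = max_{0 ≤ k ≤ n} S_k` of the walk up to time `n = 2m`. -/
noncomputable def walkMax (m : ℕ) (ω : Fin (2*m) → Bool) : ℤ :=
  Finset.sup' (Finset.range (2*m+1)) (Finset.nonempty_range_iff.mpr (Nat.succ_ne_zero _))
    (fun k => walkS m k ω)

/-- `W = M_n / √n` with `n = 2m`. -/
noncomputable def walkW (m : ℕ) (ω : Fin (2*m) → Bool) : ℝ :=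
  (walkMax m ω : ℝ) / Real.sqrt (2*m)

/-- `V = 2 N_n / √n` where `N_n = ⌊(M_n+1)/2⌋` and `n = 2m`. -/
noncomputable def walkV (m : ℕ) (ω : Fin (2*m) → Bool) : ℝ :=
  2 * (((walkMax m ω + 1) / 2 : ℤ) : ℝ) / Real.sqrt (2*m)

/-!
Since `M_n ≤ 2 N_n ≤ M_n + 1`, we have `0 ≤ V - W ≤ 1 / √n` pointwise, which gives the
Wasserstein bound. For the Kolmogorov bound, `{V ≤ z} ⊆ {W ≤ z}` and on the difference
`M_n ≤ z √n < M_n + 1`, i.e. `M_n = ⌊z √n⌋`. By the reflection principle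
`P(M_n = r) = P(S_n = r) + P(S_n = r + 1)`, and one of the two terms vanishes because `S_n` is
even, so `P(M_n = r) ≤ 2^{-2m} C(2m, m)`. Wallis' inequality bounds this by `1 / √(π m)`.
-/

open Real

theorem exists_eq_of_abs_succ_sub_le_one {f : ℕ → ℤ} (hf : ∀ k, |f (k + 1) - f k| ≤ 1)
    {c : ℤ} {k : ℕ} (h0 : f 0 ≤ c) (hk : c ≤ f k) : ∃ j ≤ k, f j = c := by
  induction k with
  | zero => exact ⟨0, le_rfl, le_antisymm h0 hk⟩
  | succ k ih =>
    by_cases hc : c ≤ f k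
    · obtain ⟨j, hj, hfj⟩ := ih hc
      exact ⟨j, by omega, hfj⟩
    · have := abs_le.mp (hf k)
      exact ⟨k + 1, le_rfl, by omega⟩

lemma ncard_le_eq_add {α : Type*} [Finite α] (f : α → ℤ) (r : ℤ) :
    {x | r ≤ f x}.ncard = {x | f x = r}.ncard + {x | r + 1 ≤ f x}.ncard := by
  rw [← Set.ncard_union_eq (Set.disjoint_left.mpr fun x h1 h2 => by simp_all)]
  congr 1
  ext x
  simp only [Set.mem_ofPred_eq, Set.mem_union]
  omega

theorem abs_integral_comp_sub_le_of_lipschitzWith {Ω : Type*} [MeasurableSpace Ω]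
    {μ : Measure Ω} [IsProbabilityMeasure μ] {h : ℝ → ℝ} {K : NNReal} (hh : LipschitzWith K h)
    {f g : Ω → ℝ} (hf : Integrable (fun ω => h (f ω)) μ) (hg : Integrable (fun ω => h (g ω)) μ)
    {δ : ℝ} (hfg : ∀ ω, |f ω - g ω| ≤ δ) :
    |(∫ ω, h (f ω) ∂μ) - ∫ ω, h (g ω) ∂μ| ≤ K * δ := by
  rw [← integral_sub hf hg, ← Real.norm_eq_abs]
  refine (norm_integral_le_of_norm_le_const (Filter.Eventually.of_forall fun ω => ?_)).trans_eq
    (by rw [probReal_univ, mul_one])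
  rw [← dist_eq_norm]
  exact (hh.dist_le_mul _ _).trans (mul_le_mul_of_nonneg_left (hfg ω) K.coe_nonneg)

theorem centralBinom_mul_sqrt_pi_mul_le (n : ℕ) : (n.centralBinom : ℝ) * √(π * n) ≤ 4 ^ n := by
  set c : ℝ := (n.centralBinom : ℝ)
  have hc : 0 < c := Nat.cast_pos.mpr n.centralBinom_pos
  have hfact : ((2 * n).factorial : ℝ) = c * n.factorial ^ 2 := by
    have := Nat.choose_mul_factorial_mul_factorial (show n ≤ 2 * n by omega)
    rw [show 2 * n - n = n by omega, ← Nat.centralBinom_eq_two_mul_choose] at this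
    rw [← this]
    push_cast
    ring
  have hW : Wallis.W n * (c ^ 2 * (2 * n + 1)) = 16 ^ n := by
    rw [Wallis.W_eq_factorial_ratio, hfact, show (16 : ℝ) ^ n = 2 ^ (4 * n) by
      rw [pow_mul]; norm_num]
    field_simp
  have hle := Wallis.le_W n
  have hsq : π * n * c ^ 2 ≤ 16 ^ n := by
    rw [← hW]
    have : ((2 * n + 1 : ℝ) / (2 * n + 2)) * (π / 2) * (c ^ 2 * (2 * n + 1)) ≤
        Wallis.W n * (c ^ 2 * (2 * n + 1)) :=
      mul_le_mul_of_nonneg_right hle (by positivity)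
    refine le_trans ?_ this
    rw [div_mul_eq_mul_div, div_mul_eq_mul_div, le_div_iff₀ (by positivity)]
    nlinarith [mul_nonneg pi_pos.le (sq_nonneg c)]
  calc c * √(π * n) = √(π * n * c ^ 2) := by
        rw [sqrt_mul' _ (sq_nonneg c), sqrt_sq hc.le, mul_comm]
    _ ≤ √(16 ^ n) := sqrt_le_sqrt hsq
    _ = 4 ^ n := by
        rw [show (16 : ℝ) ^ n = (4 ^ n) ^ 2 by rw [← pow_mul, mul_comm, pow_mul]; norm_num,
          sqrt_sq (by positivity)]

lemma centralBinom_div_four_pow_le {m : ℕ} (hm : 0 < m) :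
    (m.centralBinom : ℝ) / 4 ^ m ≤ √(2 / π) / √(2 * m) := by
  have hπm : 0 < √(π * m) := sqrt_pos.mpr (by positivity)
  rw [← sqrt_div (by positivity), show 2 / π / (2 * m) = (π * m)⁻¹ by field_simp, sqrt_inv,
    div_le_iff₀ (by positivity), inv_mul_eq_div, le_div_iff₀ hπm]
  exact centralBinom_mul_sqrt_pi_mul_le m

section Walk

variable {m : ℕ}

lemma walkS_zero (ω : Fin (2*m) → Bool) : walkS m 0 ω = 0 := by
  simp [walkS]

lemma abs_walkS_succ_sub_le (k : ℕ) (ω : Fin (2*m) → Bool) :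
    |walkS m (k + 1) ω - walkS m k ω| ≤ 1 := by
  have hdiff : walkS m (k + 1) ω - walkS m k ω =
      ∑ i : Fin (2*m), if (i : ℕ) = k then (if ω i then 1 else -1) else 0 := by
    rw [walkS, walkS, ← Finset.sum_sub_distrib]
    refine Finset.sum_congr rfl fun i _ => ?_
    split_ifs <;> omega
  rw [hdiff]
  by_cases hk : k < 2*m
  · rw [Finset.sum_eq_single ⟨k, hk⟩ (fun i _ hi => if_neg fun h => hi (Fin.ext h)) (by simp)]
    split_ifs <;> simp
  · rw [Finset.sum_eq_zero fun i _ => if_neg (by omega)]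
    simp

lemma exists_walkS_eq {ω : Fin (2*m) → Bool} {c : ℤ} {k : ℕ} (hc : 0 ≤ c)
    (hk : c ≤ walkS m k ω) : ∃ j ≤ k, walkS m j ω = c :=
  exists_eq_of_abs_succ_sub_le_one (f := fun j => walkS m j ω)
    (fun j => abs_walkS_succ_sub_le j ω) (by simpa only [walkS_zero] using hc) hk

lemma walkS_le_walkMax {k : ℕ} (hk : k ≤ 2*m) (ω : Fin (2*m) → Bool) :
    walkS m k ω ≤ walkMax m ω :=
  Finset.le_sup' (fun j => walkS m j ω) (Finset.mem_range.mpr (by omega))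

lemma walkMax_nonneg (ω : Fin (2*m) → Bool) : 0 ≤ walkMax m ω :=
  walkS_zero ω ▸ walkS_le_walkMax (Nat.zero_le _) ω

lemma exists_walkS_eq_of_le_walkMax {ω : Fin (2*m) → Bool} {r : ℤ} (hr : 0 ≤ r)
    (h : r ≤ walkMax m ω) : ∃ k ≤ 2*m, walkS m k ω = r := by
  obtain ⟨k, hk, hmax⟩ := Finset.exists_mem_eq_sup' Finset.nonempty_range_add_one
    (fun j => walkS m j ω)
  rw [walkMax, hmax] at h
  obtain ⟨j, hj, hjr⟩ := exists_walkS_eq hr h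
  exact ⟨j, by simp only [Finset.mem_range] at hk; omega, hjr⟩

lemma walkS_two_mul (ω : Fin (2*m) → Bool) :
    walkS m (2*m) ω = 2 * (Finset.univ.filter (fun i => ω i)).card - 2*m := by
  have hstep : ∀ i : Fin (2*m), (if (i : ℕ) < 2*m then (if ω i then (1 : ℤ) else -1) else 0)
      = 2 * (if ω i then 1 else 0) - 1 := fun i => by
    simp only [i.isLt, if_true]; split_ifs <;> norm_num
  rw [walkS, Finset.sum_congr rfl fun i _ => hstep i, Finset.sum_sub_distrib, ← Finset.mul_sum,
    Finset.sum_boole]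
  simp

lemma even_walkS_two_mul (ω : Fin (2*m) → Bool) : Even (walkS m (2*m) ω) := by
  rw [walkS_two_mul]
  exact ⟨_ - m, by ring⟩

lemma ncard_walkS_two_mul_eq_le (s : ℤ) :
    {ω : Fin (2*m) → Bool | walkS m (2*m) ω = s}.ncard ≤ m.centralBinom := by
  rcases Set.eq_empty_or_nonempty {ω : Fin (2*m) → Bool | walkS m (2*m) ω = s} with h | ⟨ω₀, hω₀⟩
  · simp [h]
  set j := (Finset.univ.filter (fun i => ω₀ i)).card
  calc {ω : Fin (2*m) → Bool | walkS m (2*m) ω = s}.ncard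
      ≤ ((Finset.univ : Finset (Fin (2*m))).powersetCard j : Set (Finset (Fin (2*m)))).ncard := by
        refine Set.ncard_le_ncard_of_injOn (fun ω => Finset.univ.filter (fun i => ω i)) ?_ ?_
        · intro ω hω
          have := walkS_two_mul ω
          have := walkS_two_mul ω₀
          simp only [Set.mem_ofPred_eq] at hω hω₀
          simp only [Finset.mem_coe, Finset.mem_powersetCard, Finset.subset_univ, true_and]
          omega
        · intro ω₁ _ ω₂ _ h
          funext i
          simpa using congrArg (i ∈ ·) h
    _ = (2*m).choose j := by
        rw [Set.ncard_coe_finset, Finset.card_powersetCard, Finset.card_univ, Fintype.card_fin]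
    _ ≤ m.centralBinom := Nat.choose_le_centralBinom j m

end Walk

def reflectFrom {n : ℕ} (t : ℕ) (ω : Fin n → Bool) : Fin n → Bool :=
  fun i => if (i : ℕ) < t then ω i else !ω i

open Classical in
/-- First time the walk is at level `r` (junk value `0` if it never is). -/
noncomputable def hitTime (m : ℕ) (r : ℤ) (ω : Fin (2*m) → Bool) : ℕ :=
  if h : ∃ k, walkS m k ω = r then Nat.find h else 0

noncomputable def reflectAtHit (m : ℕ) (r : ℤ) (ω : Fin (2*m) → Bool) : Fin (2*m) → Bool :=
  reflectFrom (hitTime m r ω) ω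

section Reflection

variable {m : ℕ} {r : ℤ} {ω : Fin (2*m) → Bool}

lemma walkS_reflectFrom (t k : ℕ) (ω : Fin (2*m) → Bool) :
    walkS m k (reflectFrom t ω) = 2 * walkS m (min k t) ω - walkS m k ω := by
  rw [walkS, walkS, walkS, Finset.mul_sum, ← Finset.sum_sub_distrib]
  refine Finset.sum_congr rfl fun i _ => ?_
  simp only [reflectFrom, lt_min_iff]
  by_cases hk : (i : ℕ) < k <;> by_cases ht : (i : ℕ) < t <;>
    by_cases hω : ω i <;> simp [hk, ht, hω]

lemma walkS_hitTime (h : ∃ k, walkS m k ω = r) : walkS m (hitTime m r ω) ω = r := by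
  rw [hitTime, dif_pos h]
  exact Nat.find_spec h

lemma hitTime_le {k : ℕ} (h : walkS m k ω = r) : hitTime m r ω ≤ k := by
  rw [hitTime, dif_pos ⟨k, h⟩]
  exact Nat.find_min' _ h

lemma walkS_reflectAtHit_of_le {k : ℕ} (hk : k ≤ hitTime m r ω) :
    walkS m k (reflectAtHit m r ω) = walkS m k ω := by
  rw [reflectAtHit, walkS_reflectFrom, min_eq_left hk]
  ring

lemma hitTime_reflectAtHit (h : ∃ k, walkS m k ω = r) :
    hitTime m r (reflectAtHit m r ω) = hitTime m r ω := by
  have hit : walkS m (hitTime m r ω) (reflectAtHit m r ω) = r := by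
    rw [walkS_reflectAtHit_of_le le_rfl, walkS_hitTime h]
  refine le_antisymm (hitTime_le hit) (not_lt.mp fun hlt => ?_)
  have := walkS_hitTime ⟨_, hit⟩
  rw [walkS_reflectAtHit_of_le hlt.le] at this
  exact (hitTime_le this).not_gt hlt

lemma reflectAtHit_reflectAtHit (h : ∃ k, walkS m k ω = r) :
    reflectAtHit m r (reflectAtHit m r ω) = ω := by
  funext i
  rw [reflectAtHit, hitTime_reflectAtHit h]
  by_cases hi : (i : ℕ) < hitTime m r ω <;> simp [reflectAtHit, reflectFrom, hi]

lemma walkS_two_mul_reflectAtHit {k : ℕ} (hk : k ≤ 2*m) (h : walkS m k ω = r) :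
    walkS m (2*m) (reflectAtHit m r ω) = 2 * r - walkS m (2*m) ω := by
  rw [reflectAtHit, walkS_reflectFrom, min_eq_right ((hitTime_le h).trans hk),
    walkS_hitTime ⟨k, h⟩]

/-- Reflection principle: reflecting a path after its first visit to `r` exchanges the two sets. -/
theorem ncard_le_walkMax_and_walkS_lt (hr : 0 ≤ r) :
    {ω : Fin (2*m) → Bool | r ≤ walkMax m ω ∧ walkS m (2*m) ω < r}.ncard =
      {ω : Fin (2*m) → Bool | r < walkS m (2*m) ω}.ncard := by
  have hit_of_le : ∀ ω : Fin (2*m) → Bool, r ≤ walkMax m ω → ∃ k ≤ 2*m, walkS m k ω = r :=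
    fun ω => exists_walkS_eq_of_le_walkMax hr
  have hit_of_lt : ∀ ω : Fin (2*m) → Bool, r < walkS m (2*m) ω → ∃ k ≤ 2*m, walkS m k ω = r :=
    fun ω h => exists_walkS_eq hr h.le
  refine Set.BijOn.ncard_eq (f := reflectAtHit m r)
    (Set.InvOn.bijOn (f' := reflectAtHit m r) ⟨?_, ?_⟩ ?_ ?_)
  · rintro ω ⟨hM, -⟩
    obtain ⟨k, -, hk⟩ := hit_of_le ω hM
    exact reflectAtHit_reflectAtHit ⟨k, hk⟩
  · intro ω hS
    obtain ⟨k, -, hk⟩ := hit_of_lt ω hS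
    exact reflectAtHit_reflectAtHit ⟨k, hk⟩
  · rintro ω ⟨hM, hS⟩
    obtain ⟨k, hk, hkr⟩ := hit_of_le ω hM
    change r < _
    rw [walkS_two_mul_reflectAtHit hk hkr]
    omega
  · intro ω hS
    obtain ⟨k, hk, hkr⟩ := hit_of_lt ω hS
    change r < walkS m (2*m) ω at hS
    refine ⟨?_, by rw [walkS_two_mul_reflectAtHit hk hkr]; omega⟩
    calc r = walkS m (hitTime m r ω) (reflectAtHit m r ω) := by
          rw [walkS_reflectAtHit_of_le le_rfl, walkS_hitTime ⟨k, hkr⟩]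
      _ ≤ walkMax m (reflectAtHit m r ω) := walkS_le_walkMax ((hitTime_le hkr).trans hk) _

end Reflection

section Counting

variable {m : ℕ}

lemma ncard_le_walkMax {r : ℤ} (hr : 0 ≤ r) :
    {ω : Fin (2*m) → Bool | r ≤ walkMax m ω}.ncard =
      {ω : Fin (2*m) → Bool | r ≤ walkS m (2*m) ω}.ncard +
        {ω : Fin (2*m) → Bool | r + 1 ≤ walkS m (2*m) ω}.ncard := by
  have hsplit : {ω : Fin (2*m) → Bool | r ≤ walkMax m ω} =
      {ω | r ≤ walkS m (2*m) ω} ∪ {ω | r ≤ walkMax m ω ∧ walkS m (2*m) ω < r} := by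
    ext ω
    have := walkS_le_walkMax le_rfl ω
    simp only [Set.mem_ofPred_eq, Set.mem_union]
    omega
  rw [hsplit, Set.ncard_union_eq (Set.disjoint_left.mpr fun ω h1 h2 => h2.2.not_ge h1),
    ncard_le_walkMax_and_walkS_lt hr]
  simp only [Int.add_one_le_iff]

lemma ncard_walkMax_eq {r : ℤ} (hr : 0 ≤ r) :
    {ω : Fin (2*m) → Bool | walkMax m ω = r}.ncard =
      {ω : Fin (2*m) → Bool | walkS m (2*m) ω = r}.ncard +
        {ω : Fin (2*m) → Bool | walkS m (2*m) ω = r + 1}.ncard := by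
  have := ncard_le_eq_add (walkMax m) r
  have := ncard_le_eq_add (walkS m (2*m)) r
  have := ncard_le_eq_add (walkS m (2*m)) (r + 1)
  have := ncard_le_walkMax (m := m) hr
  have := ncard_le_walkMax (m := m) (r := r + 1) (by omega)
  omega

theorem ncard_walkMax_eq_le (r : ℤ) :
    {ω : Fin (2*m) → Bool | walkMax m ω = r}.ncard ≤ m.centralBinom := by
  rcases lt_or_ge r 0 with hr | hr
  · have : {ω : Fin (2*m) → Bool | walkMax m ω = r} = ∅ :=
      Set.eq_empty_of_forall_notMem fun ω h => by
        have := walkMax_nonneg ω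
        simp_all only [Set.mem_ofPred_eq]
        omega
    simp [this]
  have ncard_odd : ∀ s : ℤ, Odd s → {ω : Fin (2*m) → Bool | walkS m (2*m) ω = s}.ncard = 0 :=
    fun s hs => by
      rw [Set.ncard_eq_zero, Set.eq_empty_iff_forall_notMem]
      intro ω h
      exact Int.not_even_iff_odd.mpr hs (h ▸ even_walkS_two_mul ω)
  rw [ncard_walkMax_eq hr]
  rcases Int.even_or_odd r with he | ho
  · rw [ncard_odd (r + 1) he.add_one, add_zero]
    exact ncard_walkS_two_mul_eq_le r
  · rw [ncard_odd r ho, zero_add]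
    exact ncard_walkS_two_mul_eq_le (r + 1)

end Counting

section Distances

variable {m : ℕ}

instance : IsProbabilityMeasure (walkP m) := by
  unfold walkP
  infer_instance

lemma walkP_toReal (A : Set (Fin (2*m) → Bool)) :
    (walkP m A).toReal = A.ncard / 4 ^ m := by
  classical
  rw [walkP, PMF.toMeasure_uniformOfFintype_apply A A.to_countable.measurableSet,
    ENNReal.toReal_div, ENNReal.toReal_natCast, ENNReal.toReal_natCast,
    ← Nat.card_coe_set_eq, Nat.card_eq_fintype_card, Fintype.card_fun, Fintype.card_fin,
    Fintype.card_bool, pow_mul]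
  norm_num

lemma walkW_le_walkV (ω : Fin (2*m) → Bool) : walkW m ω ≤ walkV m ω := by
  refine div_le_div_of_nonneg_right ?_ (sqrt_nonneg _)
  exact_mod_cast (show walkMax m ω ≤ 2 * ((walkMax m ω + 1) / 2) by omega)

lemma walkV_le_walkW_add (ω : Fin (2*m) → Bool) : walkV m ω ≤ walkW m ω + 1 / √(2*m) := by
  rw [walkW, ← add_div]
  refine div_le_div_of_nonneg_right ?_ (sqrt_nonneg _)
  exact_mod_cast (show 2 * ((walkMax m ω + 1) / 2) ≤ walkMax m ω + 1 by omega)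

lemma setOf_walkW_le_diff_subset (hm : 0 < m) (z : ℝ) :
    {ω | walkW m ω ≤ z} \ {ω | walkV m ω ≤ z} ⊆ {ω | walkMax m ω = ⌊z * √(2*m)⌋} := by
  rintro ω ⟨hW, hV⟩
  have hs : 0 < √(2*m : ℝ) := sqrt_pos.mpr (by positivity)
  have hlt : z < walkW m ω + 1 / √(2*m) := (not_le.mp hV).trans_le (walkV_le_walkW_add ω)
  rw [Set.mem_ofPred_eq, walkW, div_le_iff₀ hs] at hW
  rw [walkW, ← add_div, lt_div_iff₀ hs] at hlt
  exact (Int.floor_eq_iff.mpr ⟨hW, hlt⟩).symm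

end Distances

theorem stmt19 (m : ℕ) (hm : 0 < m) :
    (∀ z : ℝ,
        |(walkP m {ω | walkV m ω ≤ z}).toReal - (walkP m {ω | walkW m ω ≤ z}).toReal| ≤
          Real.sqrt (2 / Real.pi) / Real.sqrt (2*m)) ∧
    (∀ h : ℝ → ℝ, LipschitzWith 1 h →
        |(∫ ω, h (walkV m ω) ∂(walkP m)) - ∫ ω, h (walkW m ω) ∂(walkP m)| ≤
          1 / Real.sqrt (2*m)) := by
  constructor
  · intro z
    have hVW : {ω | walkV m ω ≤ z} ⊆ {ω | walkW m ω ≤ z} :=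
      fun ω hV => (walkW_le_walkV ω).trans hV
    simp only [← measureReal_def]
    rw [abs_sub_comm, abs_of_nonneg (sub_nonneg.mpr (measureReal_mono hVW)),
      ← measureReal_sdiff hVW (Set.to_countable _).measurableSet]
    calc (walkP m).real ({ω | walkW m ω ≤ z} \ {ω | walkV m ω ≤ z})
        ≤ (walkP m).real {ω | walkMax m ω = ⌊z * √(2*m)⌋} :=
          measureReal_mono (setOf_walkW_le_diff_subset hm z)
      _ ≤ m.centralBinom / 4 ^ m := by
          rw [measureReal_def, walkP_toReal]
          gcongr
          exact_mod_cast ncard_walkMax_eq_le _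
      _ ≤ √(2 / π) / √(2*m) := centralBinom_div_four_pow_le hm
  · intro h hh
    have hVW : ∀ ω, |walkV m ω - walkW m ω| ≤ 1 / √(2*m) := fun ω => by
      rw [abs_of_nonneg (sub_nonneg.mpr (walkW_le_walkV ω))]
      linarith [walkV_le_walkW_add ω]
    simpa using abs_integral_comp_sub_le_of_lipschitzWith hh .of_finite .of_finite hVW
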